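/- arXiv:1902.06656 — 5 statements merged into one kernel-verified Lean document; each statement's English description precedes it below -/
import Mathlib

section
/- For natural numbers m, n, r with r ≤ m + n, the sum ∑_{k=0}^{r} 2^{-k} · C(n,k)·C(m,r-k)/C(m+n,r) is at most 1, with equality if and only if n = 0 or r = 0. -/
/-!
The numbers `C(n,k) C(m,r-k) / C(m+n,r)`, `k = 0, …, r`, are hypergeometric probabilities:
nonnegative, summing to `1` by Vandermonde's identity. The sum is the average of the weights
`2^{-k} ≤ 1` against them, so it is at most `1`, with equality iff all the mass sits at `k = 0`,
the only index of weight `1`. When `n ≥ 1` and `r ≥ 1`, the index `k = max 1 (r - m)` carries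
positive mass, so equality forces `n = 0` or `r = 0`.
-/

open Finset

theorem Nat.sum_range_choose_mul_choose_sub (m n r : ℕ) :
    ∑ k ∈ range (r + 1), n.choose k * m.choose (r - k) = (m + n).choose r := by
  rw [add_comm m n, Nat.add_choose_eq, Finset.Nat.sum_antidiagonal_eq_sum_range_succ_mk]

theorem Nat.exists_ne_zero_choose_mul_choose_sub_pos {m n r : ℕ} (hr : r ≤ m + n)
    (hn : n ≠ 0) (hr₀ : r ≠ 0) :
    ∃ k ∈ range (r + 1), k ≠ 0 ∧ 0 < n.choose k * m.choose (r - k) :=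
  ⟨max 1 (r - m), by simp only [mem_range]; omega, by omega,
    Nat.mul_pos (Nat.choose_pos (by omega)) (Nat.choose_pos (by omega))⟩

theorem Nat.forall_ne_zero_choose_mul_choose_sub_eq_zero_iff {m n r : ℕ} (hr : r ≤ m + n) :
    (∀ k ∈ range (r + 1), k ≠ 0 → n.choose k * m.choose (r - k) = 0) ↔ n = 0 ∨ r = 0 := by
  constructor
  · intro h
    by_contra! hnr
    obtain ⟨k, hk, hk₀, hpos⟩ := exists_ne_zero_choose_mul_choose_sub_pos hr hnr.1 hnr.2
    exact hpos.ne' (h k hk hk₀)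
  · rintro (rfl | rfl) k hk hk₀
    · simp [Nat.choose_eq_zero_of_lt (Nat.pos_of_ne_zero hk₀)]
    · exact absurd (by simpa using hk) hk₀

theorem Finset.sum_mul_eq_sum_iff {ι R : Type*} [Ring R] [LinearOrder R] [IsStrictOrderedRing R]
    {s : Finset ι} {w c : ι → R} (hw : ∀ i ∈ s, w i ≤ 1) (hc : ∀ i ∈ s, 0 ≤ c i) :
    ∑ i ∈ s, w i * c i = ∑ i ∈ s, c i ↔ ∀ i ∈ s, w i = 1 ∨ c i = 0 := by
  have hnonneg : ∀ i ∈ s, 0 ≤ c i - w i * c i := fun i hi => by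
    rw [← one_sub_mul]
    exact mul_nonneg (sub_nonneg.2 (hw i hi)) (hc i hi)
  rw [eq_comm, ← sub_eq_zero, ← sum_sub_distrib, sum_eq_zero_iff_of_nonneg hnonneg]
  refine forall₂_congr fun i _ => ?_
  rw [← one_sub_mul, mul_eq_zero, sub_eq_zero, eq_comm]

theorem two_rpow_neg_natCast (k : ℕ) : (2 : ℝ) ^ (-(k : ℝ)) = (2 ^ k)⁻¹ := by
  rw [Real.rpow_neg_natCast, zpow_neg, zpow_natCast]

/-- for `r ≤ m + n`, the sum
`∑_{k=0}^r 2^{-k} C(n,k)C(m,r-k)/C(m+n,r)` is at most `1`, with equality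
iff `n = 0` or `r = 0`. -/
theorem stmt1 (m n r : ℕ) (hr : r ≤ m + n) :
    (∑ k ∈ Finset.range (r + 1),
        (2 : ℝ) ^ (-(k : ℝ)) * (n.choose k * m.choose (r - k) : ℝ)
          / ((m + n).choose r : ℝ)) ≤ 1
      ∧ ((∑ k ∈ Finset.range (r + 1),
            (2 : ℝ) ^ (-(k : ℝ)) * (n.choose k * m.choose (r - k) : ℝ)
              / ((m + n).choose r : ℝ)) = 1 ↔ n = 0 ∨ r = 0) := by
  have hpos : (0 : ℝ) < (m + n).choose r := by exact_mod_cast Nat.choose_pos hr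
  have htotal : ∑ k ∈ range (r + 1), (n.choose k * m.choose (r - k) : ℝ) = (m + n).choose r := by
    exact_mod_cast Nat.sum_range_choose_mul_choose_sub m n r
  have hw : ∀ k ∈ range (r + 1), ((2 : ℝ) ^ k)⁻¹ ≤ 1 := fun k _ =>
    inv_le_one_of_one_le₀ (one_le_pow₀ one_le_two)
  have hc : ∀ k ∈ range (r + 1), (0 : ℝ) ≤ n.choose k * m.choose (r - k) := fun k _ => by
    positivity
  simp only [two_rpow_neg_natCast]
  rw [← sum_div, div_le_one hpos, div_eq_one_iff_eq hpos.ne', ← htotal, sum_mul_eq_sum_iff hw hc]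
  refine ⟨sum_le_sum fun k hk => mul_le_of_le_one_left (hc k hk) (hw k hk), ?_⟩
  rw [← Nat.forall_ne_zero_choose_mul_choose_sub_eq_zero_iff hr]
  refine forall₂_congr fun k _ => ?_
  norm_num [pow_eq_one_iff_cases, or_iff_not_imp_left]
end

section
/- Let K be a hypergeometric random variable with population m+n, n successes, and r draws, and let μ = r·n/(m+n). Then for any ε > 0, P[|K − μ| ≥ ε·r] ≤ 2·exp(−2ε²r). -/
open Finset Real Classical

lemma hg_L1 (m n r j : ℕ) (hj : j ≤ r) :
    ∑ k ∈ Finset.range (r + 1), k.choose j * (n.choose k * m.choose (r - k))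
      = n.choose j * (n - j + m).choose (r - j) := by
  have h1 : ∑ k ∈ Finset.range (r + 1), k.choose j * (n.choose k * m.choose (r - k))
      = ∑ k ∈ Finset.Ico j (r + 1), k.choose j * (n.choose k * m.choose (r - k)) := by
    rw [Finset.range_eq_Ico, ← Finset.sum_Ico_consecutive _ (Nat.zero_le j) (by omega)]
    have : ∑ k ∈ Finset.Ico 0 j, k.choose j * (n.choose k * m.choose (r - k)) = 0 := by
      apply Finset.sum_eq_zero
      intro k hk
      simp only [Finset.mem_Ico] at hk
      rw [Nat.choose_eq_zero_of_lt hk.2, zero_mul]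
    rw [this, zero_add]
  rw [h1, Finset.sum_Ico_eq_sum_range]
  have h2 : r + 1 - j = (r - j) + 1 := by omega
  rw [h2]
  have h3 : ∀ i ∈ Finset.range (r - j + 1),
      (j + i).choose j * (n.choose (j + i) * m.choose (r - (j + i)))
        = n.choose j * ((n - j).choose i * m.choose ((r - j) - i)) := by
    intro i _
    have hrk : r - (j + i) = (r - j) - i := by omega
    rw [hrk]
    have key : n.choose (j + i) * (j + i).choose j = n.choose j * (n - j).choose i := by
      by_cases h : j + i ≤ n
      · have := Nat.choose_mul (n := n) (k := j + i) (s := j) (Nat.le_add_right _ _)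
        simpa using this
      · push_neg at h
        rw [Nat.choose_eq_zero_of_lt h, zero_mul]
        by_cases hjn : j ≤ n
        · rw [Nat.choose_eq_zero_of_lt (by omega : n - j < i), mul_zero]
        · rw [Nat.choose_eq_zero_of_lt (by omega), zero_mul]
    calc (j + i).choose j * (n.choose (j + i) * m.choose ((r - j) - i))
        = (n.choose (j + i) * (j + i).choose j) * m.choose ((r - j) - i) := by ring
      _ = (n.choose j * (n - j).choose i) * m.choose ((r - j) - i) := by rw [key]
      _ = n.choose j * ((n - j).choose i * m.choose ((r - j) - i)) := by ring
  rw [Finset.sum_congr rfl h3, ← Finset.mul_sum]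
  congr 1
  rw [Nat.add_choose_eq, Finset.Nat.sum_antidiagonal_eq_sum_range_succ_mk]

/-- `C(n,j)·(m+n)^j ≤ C(m+n,j)·n^j`. -/
lemma hg_L2 (m n : ℕ) : ∀ j : ℕ, n.choose j * (m + n) ^ j ≤ (m + n).choose j * n ^ j := by
  intro j
  induction j with
  | zero => simp
  | succ j ih =>
    have key : (n - j) * (m + n) ≤ (m + n - j) * n := by
      rcases le_or_gt j n with h | h
      · have : (n - j) * (m + n) = n * (m + n) - j * (m + n) := by
          rw [Nat.sub_mul]
        rw [this]
        have h2 : (m + n - j) * n = n * (m + n) - j * n := by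
          rw [Nat.sub_mul]; ring_nf
        rw [h2]
        apply Nat.sub_le_sub_left
        exact Nat.mul_le_mul_left j (Nat.le_add_left n m)
      · rw [Nat.sub_eq_zero_of_le h.le, zero_mul]; exact Nat.zero_le _
    have h1 : n.choose (j+1) * (m + n) ^ (j+1) * (j+1)
        = (n.choose j * (m+n)^j) * ((n - j) * (m + n)) := by
      rw [mul_comm (n.choose (j+1)) ((m+n)^(j+1)), mul_assoc, Nat.choose_succ_right_eq]
      ring
    have h2 : (m + n).choose (j+1) * n ^ (j+1) * (j+1)
        = ((m+n).choose j * n^j) * ((m + n - j) * n) := by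
      rw [mul_comm ((m+n).choose (j+1)) (n^(j+1)), mul_assoc, Nat.choose_succ_right_eq]
      ring
    have := Nat.mul_le_mul ih key
    apply Nat.le_of_mul_le_mul_right _ (Nat.succ_pos j)
    rw [h1, h2]; exact this

/-- Factorial moment of hypergeometric numerator is at most binomial's. -/
lemma hg_L3 (m n r j : ℕ) (hj : j ≤ r) (hr : r ≤ m + n) (hpos : 0 < m + n) :
    (n.choose j * (n - j + m).choose (r - j) : ℝ)
      ≤ ((m + n).choose r : ℝ) * (r.choose j : ℝ) * ((n : ℝ) / (m + n)) ^ j := by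
  rcases le_or_gt j n with hjn | hjn
  · have hnj : n - j + m = m + n - j := by omega
    rw [hnj]
    have hmn : (0 : ℝ) < (m + n : ℝ) := by exact_mod_cast hpos
    have hden : (0:ℝ) < ((m:ℝ) + n) ^ j := by positivity
    rw [div_pow, show ((m + n).choose r : ℝ) * (r.choose j : ℝ) * ((n:ℝ)^j / ((m:ℝ)+n)^j)
        = ((m + n).choose r : ℝ) * (r.choose j : ℝ) * (n:ℝ)^j / ((m:ℝ)+n)^j from by ring,
      le_div_iff₀ hden]
    have key : n.choose j * (m + n - j).choose (r - j) * (m + n) ^ j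
        ≤ (m + n).choose r * r.choose j * n ^ j := by
      have hc := Nat.choose_mul (n := m + n) (k := r) (s := j) hj
      calc n.choose j * (m + n - j).choose (r - j) * (m + n) ^ j
          = (n.choose j * (m + n) ^ j) * (m + n - j).choose (r - j) := by ring
        _ ≤ ((m + n).choose j * n ^ j) * (m + n - j).choose (r - j) :=
            Nat.mul_le_mul_right _ (hg_L2 m n j)
        _ = ((m + n).choose j * (m + n - j).choose (r - j)) * n ^ j := by ring
        _ = ((m + n).choose r * r.choose j) * n ^ j := by rw [← hc]
    push_cast
    exact_mod_cast key
  · rw [Nat.choose_eq_zero_of_lt hjn]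
    push_cast
    rw [zero_mul]
    positivity

/-- MGF domination: hypergeometric mgf at `1+y ≥ 1` is at most binomial mgf. -/
lemma hg_L4 (m n r : ℕ) (hr : r ≤ m + n) (hpos : 0 < m + n) (y : ℝ) (hy : 0 ≤ y) :
    ∑ k ∈ Finset.range (r + 1),
        (n.choose k * m.choose (r - k) : ℝ) / ((m + n).choose r : ℝ) * (1 + y) ^ k
      ≤ (1 + (n : ℝ) / (m + n) * y) ^ r := by
  have hC : (0 : ℝ) < ((m + n).choose r : ℝ) := by
    exact_mod_cast Nat.choose_pos hr
  have step1 : ∀ k ∈ Finset.range (r + 1),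
      (n.choose k * m.choose (r - k) : ℝ) / ((m + n).choose r : ℝ) * (1 + y) ^ k
        = ∑ j ∈ Finset.range (r + 1),
            (n.choose k * m.choose (r - k) : ℝ) / ((m + n).choose r : ℝ)
              * ((k.choose j : ℝ) * y ^ j) := by
    intro k hk
    simp only [Finset.mem_range] at hk
    have hpow : (1 + y) ^ k = ∑ j ∈ Finset.range (k + 1), y ^ j * (k.choose j : ℝ) := by
      rw [add_comm (1:ℝ) y, add_pow]
      simp
    have hext : ∑ j ∈ Finset.range (k + 1), y ^ j * (k.choose j : ℝ)
        = ∑ j ∈ Finset.range (r + 1), y ^ j * (k.choose j : ℝ) := by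
      apply Finset.sum_subset (Finset.range_subset_range.mpr (by omega))
      intro j _ hj
      simp only [Finset.mem_range, not_lt] at hj
      rw [Nat.choose_eq_zero_of_lt (by omega), Nat.cast_zero, mul_zero]
    rw [hpow, hext, Finset.mul_sum]
    apply Finset.sum_congr rfl
    intro j _; ring
  rw [Finset.sum_congr rfl step1, Finset.sum_comm]
  have step2 : ∀ j ∈ Finset.range (r + 1),
      ∑ k ∈ Finset.range (r + 1),
          (n.choose k * m.choose (r - k) : ℝ) / ((m + n).choose r : ℝ)
            * ((k.choose j : ℝ) * y ^ j)
        ≤ (r.choose j : ℝ) * ((n : ℝ) / (m + n)) ^ j * y ^ j := by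
    intro j hj
    simp only [Finset.mem_range] at hj
    have hsum : ∑ k ∈ Finset.range (r + 1),
        (n.choose k * m.choose (r - k) : ℝ) / ((m + n).choose r : ℝ)
          * ((k.choose j : ℝ) * y ^ j)
        = ((n.choose j * (n - j + m).choose (r - j) : ℕ) : ℝ) / ((m + n).choose r : ℝ)
            * y ^ j := by
      rw [← hg_L1 m n r j (by omega)]
      rw [Nat.cast_sum, Finset.sum_div, Finset.sum_mul]
      apply Finset.sum_congr rfl
      intro k _
      push_cast
      ring
    rw [hsum]
    rw [div_mul_eq_mul_div, div_le_iff₀ hC]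
    have := hg_L3 m n r j (by omega) hr hpos
    calc ((n.choose j * (n - j + m).choose (r - j) : ℕ) : ℝ) * y ^ j
        ≤ ((m + n).choose r : ℝ) * (r.choose j : ℝ) * ((n : ℝ) / (m + n)) ^ j * y ^ j := by
          apply mul_le_mul_of_nonneg_right _ (by positivity)
          exact_mod_cast this
      _ = (r.choose j : ℝ) * ((n : ℝ) / (m + n)) ^ j * y ^ j * ((m + n).choose r : ℝ) := by
          ring
  calc ∑ j ∈ Finset.range (r + 1), ∑ k ∈ Finset.range (r + 1),
          (n.choose k * m.choose (r - k) : ℝ) / ((m + n).choose r : ℝ)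
            * ((k.choose j : ℝ) * y ^ j)
      ≤ ∑ j ∈ Finset.range (r + 1), (r.choose j : ℝ) * ((n : ℝ) / (m + n)) ^ j * y ^ j :=
        Finset.sum_le_sum step2
    _ = (1 + (n : ℝ) / (m + n) * y) ^ r := by
        rw [add_comm (1 : ℝ), add_pow]
        apply Finset.sum_congr rfl
        intro j _
        rw [mul_pow, one_pow]
        ring

/-- Hoeffding's lemma for a Bernoulli-type bound. -/
lemma hoeff_lemma (p : ℝ) (hp0 : 0 ≤ p) (hp1 : p ≤ 1) (s : ℝ) :
    1 - p + p * Real.exp s ≤ Real.exp (p * s + s ^ 2 / 8) := by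
  set D : ℝ → ℝ := fun t => 1 - p + p * Real.exp t with hDdef
  have hD : ∀ t, 0 < D t := by
    intro t
    rcases lt_or_eq_of_le hp1 with h | h
    · have : 0 ≤ p * Real.exp t := by positivity
      simp only [hDdef]; linarith
    · have := Real.exp_pos t
      simp only [hDdef, h]; linarith
  have hDd : ∀ t, HasDerivAt D (p * Real.exp t) t := by
    intro t
    exact ((Real.hasDerivAt_exp t).const_mul p).const_add (1 - p)
  set F : ℝ → ℝ := fun t => p * t + t ^ 2 / 8 - Real.log (D t) with hFdef
  set g : ℝ → ℝ := fun t => p + t / 4 - p * Real.exp t / D t with hgdef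
  have hF' : ∀ t, HasDerivAt F (g t) t := by
    intro t
    have h1 : HasDerivAt (fun t : ℝ => p * t) p t := by
      simpa using (hasDerivAt_id t).const_mul p
    have h2 : HasDerivAt (fun t : ℝ => t ^ 2 / 8) (t / 4) t := by
      have := (hasDerivAt_pow 2 t).div_const 8
      refine this.congr_deriv ?_
      norm_num
      ring
    have h3 : HasDerivAt (fun t => Real.log (D t)) (p * Real.exp t / D t) t :=
      (hDd t).log (hD t).ne'
    exact (h1.add h2).sub h3
  have hg' : ∀ t, HasDerivAt g (1/4 - p * Real.exp t * (1 - p) / (D t) ^ 2) t := by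
    intro t
    have h1 : HasDerivAt (fun t : ℝ => p + t / 4) (1/4) t := by
      simpa using ((hasDerivAt_id t).div_const 4).const_add p
    have h2 : HasDerivAt (fun t => p * Real.exp t / D t)
        ((p * Real.exp t * D t - p * Real.exp t * (p * Real.exp t)) / (D t) ^ 2) t :=
      ((Real.hasDerivAt_exp t).const_mul p).div (hDd t) (hD t).ne'
    have h3 := h1.sub h2
    refine h3.congr_deriv ?_
    rw [show D t = 1 - p + p * Real.exp t from rfl]
    have hne : ((1:ℝ) - p + p * Real.exp t) ^ 2 ≠ 0 := pow_ne_zero 2 (hD t).ne'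
    field_simp
    ring
  have hg'nonneg : ∀ t, 0 ≤ 1/4 - p * Real.exp t * (1 - p) / (D t) ^ 2 := by
    intro t
    rw [sub_nonneg, div_le_iff₀ (pow_pos (hD t) 2)]
    have ha : 0 ≤ p * Real.exp t := by positivity
    have hb : 0 ≤ 1 - p := by linarith
    have hDt : D t = 1 - p + p * Real.exp t := rfl
    nlinarith [sq_nonneg (p * Real.exp t - (1 - p))]
  have hgmono : Monotone g :=
    monotone_of_deriv_nonneg (fun t => (hg' t).differentiableAt)
      (fun t => by rw [(hg' t).deriv]; exact hg'nonneg t)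
  have hg0 : g 0 = 0 := by
    simp only [hgdef, hDdef, Real.exp_zero, mul_one]
    have : 1 - p + p = 1 := by ring
    rw [this]
    simp
  have hF0 : F 0 = 0 := by
    simp only [hFdef, hDdef, Real.exp_zero, mul_one, mul_zero]
    have : 1 - p + p = 1 := by ring
    rw [this]
    simp
  have hFnonneg : ∀ t, 0 ≤ F t := by
    intro t
    rcases le_or_gt 0 t with ht | ht
    · have hmono : MonotoneOn F (Set.Ici (0:ℝ)) := by
        apply monotoneOn_of_deriv_nonneg (convex_Ici 0)
        · exact Continuous.continuousOn (by
            have : Differentiable ℝ F := fun x => (hF' x).differentiableAt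
            exact this.continuous)
        · intro x _
          exact (hF' x).differentiableAt.differentiableWithinAt
        · intro x hx
          rw [interior_Ici] at hx
          rw [(hF' x).deriv]
          have := hgmono (le_of_lt hx)
          rw [hg0] at this
          exact this
      have := hmono (Set.self_mem_Ici) (Set.mem_Ici.mpr ht) ht
      rwa [hF0] at this
    · have hmono : AntitoneOn F (Set.Iic (0:ℝ)) := by
        apply antitoneOn_of_deriv_nonpos (convex_Iic 0)
        · exact Continuous.continuousOn (by
            have : Differentiable ℝ F := fun x => (hF' x).differentiableAt
            exact this.continuous)
        · intro x _
          exact (hF' x).differentiableAt.differentiableWithinAt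
        · intro x hx
          rw [interior_Iic] at hx
          rw [(hF' x).deriv]
          have := hgmono (le_of_lt hx)
          rw [hg0] at this
          exact this
      have := hmono (Set.mem_Iic.mpr ht.le) (Set.self_mem_Iic) ht.le
      rwa [hF0] at this
  have hFs := hFnonneg s
  simp only [hFdef] at hFs
  have hlog : Real.log (D s) ≤ p * s + s ^ 2 / 8 := by linarith
  calc 1 - p + p * Real.exp s = D s := rfl
    _ = Real.exp (Real.log (D s)) := (Real.exp_log (hD s)).symm
    _ ≤ Real.exp (p * s + s ^ 2 / 8) := Real.exp_le_exp.mpr hlog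

lemma hg_upper (m n r : ℕ) (hr : r ≤ m + n) (hpos : 0 < m + n)
    (ε : ℝ) (hε : 0 < ε) :
    ∑ k ∈ (Finset.range (r + 1)).filter
        (fun k : ℕ => (r : ℝ) * n / (m + n) + ε * r ≤ (k : ℝ)),
        (n.choose k * m.choose (r - k) : ℝ) / ((m + n).choose r : ℝ)
      ≤ Real.exp (-2 * ε ^ 2 * r) := by
  set p : ℝ := (n : ℝ) / (m + n) with hpdef
  have hmn : (0 : ℝ) < (m : ℝ) + n := by exact_mod_cast hpos
  have hp0 : 0 ≤ p := by positivity
  have hp1 : p ≤ 1 := by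
    rw [hpdef, div_le_one hmn]
    have : (n : ℝ) ≤ (m : ℝ) + n := by
      have : (0:ℝ) ≤ (m:ℝ) := Nat.cast_nonneg m
      linarith
    exact this
  set s : ℝ := 4 * ε with hsdef
  have hs : 0 < s := by positivity
  set c : ℝ := (r : ℝ) * p + ε * r with hcdef
  have hμ : (r : ℝ) * n / (m + n) = (r : ℝ) * p := by
    rw [hpdef, mul_div_assoc]
  set h : ℕ → ℝ := fun k => (n.choose k * m.choose (r - k) : ℝ) / ((m + n).choose r : ℝ)
    with hhdef
  have hhnn : ∀ k, 0 ≤ h k := fun k => by positivity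
  set U := (Finset.range (r + 1)).filter
      (fun k : ℕ => (r : ℝ) * n / (m + n) + ε * r ≤ (k : ℝ)) with hUdef
  have hterm : ∀ k ∈ U, h k ≤ h k * Real.exp (s * k) * Real.exp (-(s * c)) := by
    intro k hk
    simp only [hUdef, Finset.mem_filter, hμ] at hk
    rw [mul_assoc, ← Real.exp_add]
    apply le_mul_of_one_le_right (hhnn k)
    rw [← Real.exp_zero]
    apply Real.exp_le_exp.mpr
    have : c ≤ (k : ℝ) := by rw [hcdef]; linarith [hk.2]
    nlinarith [hs, this]
  have hy : (0:ℝ) ≤ Real.exp s - 1 := by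
    have := Real.one_le_exp hs.le
    linarith
  calc ∑ k ∈ U, h k
      ≤ ∑ k ∈ U, h k * Real.exp (s * k) * Real.exp (-(s * c)) :=
        Finset.sum_le_sum hterm
    _ = Real.exp (-(s * c)) * ∑ k ∈ U, h k * Real.exp (s * k) := by
        rw [← Finset.sum_mul, mul_comm]
    _ ≤ Real.exp (-(s * c)) * ∑ k ∈ Finset.range (r + 1), h k * Real.exp (s * k) := by
        apply mul_le_mul_of_nonneg_left _ (Real.exp_nonneg _)
        apply Finset.sum_le_sum_of_subset_of_nonneg (Finset.filter_subset _ _)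
        intro k _ _
        positivity
    _ = Real.exp (-(s * c)) * ∑ k ∈ Finset.range (r + 1),
          h k * (1 + (Real.exp s - 1)) ^ k := by
        congr 1
        apply Finset.sum_congr rfl
        intro k _
        congr 1
        rw [show (1:ℝ) + (Real.exp s - 1) = Real.exp s by ring, ← Real.exp_nat_mul,
          mul_comm]
    _ ≤ Real.exp (-(s * c)) * (1 + p * (Real.exp s - 1)) ^ r :=
        mul_le_mul_of_nonneg_left (hg_L4 m n r hr hpos _ hy) (Real.exp_nonneg _)
    _ ≤ Real.exp (-(s * c)) * Real.exp ((p * s + s ^ 2 / 8) * r) := by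
        apply mul_le_mul_of_nonneg_left _ (Real.exp_nonneg _)
        have hb : (0:ℝ) ≤ 1 + p * (Real.exp s - 1) := by nlinarith
        have hle : 1 + p * (Real.exp s - 1) ≤ Real.exp (p * s + s ^ 2 / 8) := by
          have := hoeff_lemma p hp0 hp1 s
          linarith [this]
        calc (1 + p * (Real.exp s - 1)) ^ r ≤ (Real.exp (p * s + s ^ 2 / 8)) ^ r :=
              pow_le_pow_left₀ hb hle r
          _ = Real.exp ((p * s + s ^ 2 / 8) * r) := by
              rw [← Real.exp_nat_mul, mul_comm]
    _ = Real.exp (-2 * ε ^ 2 * r) := by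
        rw [← Real.exp_add]
        congr 1
        rw [hcdef, hsdef]
        ring

lemma hg_lower (m n r : ℕ) (hr : r ≤ m + n) (hpos : 0 < m + n)
    (ε : ℝ) (hε : 0 < ε) :
    ∑ k ∈ (Finset.range (r + 1)).filter
        (fun k : ℕ => (k : ℝ) ≤ (r : ℝ) * n / (m + n) - ε * r),
        (n.choose k * m.choose (r - k) : ℝ) / ((m + n).choose r : ℝ)
      ≤ Real.exp (-2 * ε ^ 2 * r) := by
  have hmn : (0 : ℝ) < (m : ℝ) + n := by exact_mod_cast hpos
  have hswap : ∑ k ∈ (Finset.range (r + 1)).filter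
        (fun k : ℕ => (k : ℝ) ≤ (r : ℝ) * n / (m + n) - ε * r),
        (n.choose k * m.choose (r - k) : ℝ) / ((m + n).choose r : ℝ)
      = ∑ k ∈ (Finset.range (r + 1)).filter
        (fun k : ℕ => (r : ℝ) * m / (n + m) + ε * r ≤ (k : ℝ)),
        (m.choose k * n.choose (r - k) : ℝ) / ((n + m).choose r : ℝ) := by
    apply Finset.sum_nbij' (i := fun k => r - k) (j := fun k => r - k)
    · intro k hk
      simp only [Finset.mem_filter, Finset.mem_range] at hk ⊢
      obtain ⟨hk1, hk2⟩ := hk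
      have hkr : k ≤ r := by omega
      constructor
      · omega
      · have hcast : ((r - k : ℕ) : ℝ) = (r : ℝ) - (k : ℝ) := by
          push_cast [hkr]; ring
        rw [hcast]
        have hne : (m:ℝ) + n ≠ 0 := ne_of_gt hmn
        have hne2 : (n:ℝ) + m ≠ 0 := by rw [add_comm]; exact hne
        have hrsplit : (r : ℝ) * m / (n + m) = (r : ℝ) - (r : ℝ) * n / (m + n) := by
          field_simp [hne, hne2]
          ring
        rw [hrsplit]
        linarith
    · intro k hk
      simp only [Finset.mem_filter, Finset.mem_range] at hk ⊢
      obtain ⟨hk1, hk2⟩ := hk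
      have hkr : k ≤ r := by omega
      constructor
      · omega
      · have hcast : ((r - k : ℕ) : ℝ) = (r : ℝ) - (k : ℝ) := by
          push_cast [hkr]; ring
        rw [hcast]
        have hne : (m:ℝ) + n ≠ 0 := ne_of_gt hmn
        have hne2 : (n:ℝ) + m ≠ 0 := by rw [add_comm]; exact hne
        have hrsplit : (r : ℝ) * m / (n + m) = (r : ℝ) - (r : ℝ) * n / (m + n) := by
          field_simp [hne, hne2]
          ring
        rw [hrsplit] at hk2
        linarith
    · intro k hk
      simp only [Finset.mem_filter, Finset.mem_range] at hk
      omega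
    · intro k hk
      simp only [Finset.mem_filter, Finset.mem_range] at hk
      omega
    · intro k hk
      simp only [Finset.mem_filter, Finset.mem_range] at hk
      have hkr : k ≤ r := by omega
      have h1 : r - (r - k) = k := by omega
      rw [h1, Nat.add_comm n m]
      ring_nf
  rw [hswap]
  have := hg_upper n m r (by omega) (by omega) ε hε
  exact this

/-- Hoeffding's inequality for the hypergeometric distribution:
if `K` is hypergeometric with population `m+n`, `n` successes, `r` draws and
`μ = r·n/(m+n)`, then for every `ε > 0`,
`P[|K − μ| ≥ ε·r] ≤ 2·exp(−2ε²r)`. -/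
theorem stmt3 (m n r : ℕ) (hr : r ≤ m + n) (hpos : 0 < m + n)
    (ε : ℝ) (hε : 0 < ε) :
    (∑ k ∈ (Finset.range (r + 1)).filter
        (fun k : ℕ => ε * (r : ℝ) ≤ |(k : ℝ) - (r : ℝ) * n / (m + n)|),
        (n.choose k * m.choose (r - k) : ℝ) / ((m + n).choose r : ℝ))
      ≤ 2 * Real.exp (-2 * ε ^ 2 * r) := by
  set h : ℕ → ℝ := fun k => (n.choose k * m.choose (r - k) : ℝ) / ((m + n).choose r : ℝ)
    with hhdef
  have hhnn : ∀ k, 0 ≤ h k := fun k => by positivity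
  set U := (Finset.range (r + 1)).filter
      (fun k : ℕ => (r : ℝ) * n / (m + n) + ε * r ≤ (k : ℝ)) with hUdef
  set L := (Finset.range (r + 1)).filter
      (fun k : ℕ => (k : ℝ) ≤ (r : ℝ) * n / (m + n) - ε * r) with hLdef
  have hsub : (Finset.range (r + 1)).filter
      (fun k : ℕ => ε * (r : ℝ) ≤ |(k : ℝ) - (r : ℝ) * n / (m + n)|) ⊆ U ∪ L := by
    intro k hk
    simp only [Finset.mem_filter, Finset.mem_range] at hk
    simp only [hUdef, hLdef, Finset.mem_union, Finset.mem_filter, Finset.mem_range]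
    rcases le_abs.mp hk.2 with h1 | h1
    · left; exact ⟨hk.1, by linarith⟩
    · right; exact ⟨hk.1, by linarith⟩
  have step1 : (∑ k ∈ (Finset.range (r + 1)).filter
      (fun k : ℕ => ε * (r : ℝ) ≤ |(k : ℝ) - (r : ℝ) * n / (m + n)|), h k)
      ≤ ∑ k ∈ U ∪ L, h k :=
    Finset.sum_le_sum_of_subset_of_nonneg hsub (fun k _ _ => hhnn k)
  have step2 : ∑ k ∈ U ∪ L, h k ≤ (∑ k ∈ U, h k) + ∑ k ∈ L, h k := by
    have he : U ∪ L = U ∪ (L \ U) := (Finset.union_sdiff_self_eq_union).symm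
    rw [he, Finset.sum_union Finset.sdiff_disjoint.symm]
    have : ∑ k ∈ L \ U, h k ≤ ∑ k ∈ L, h k :=
      Finset.sum_le_sum_of_subset_of_nonneg (Finset.sdiff_subset) (fun k _ _ => hhnn k)
    linarith
  have hU := hg_upper m n r hr hpos ε hε
  have hL := hg_lower m n r hr hpos ε hε
  calc (∑ k ∈ (Finset.range (r + 1)).filter
      (fun k : ℕ => ε * (r : ℝ) ≤ |(k : ℝ) - (r : ℝ) * n / (m + n)|), h k)
      ≤ ∑ k ∈ U ∪ L, h k := step1
    _ ≤ (∑ k ∈ U, h k) + ∑ k ∈ L, h k := step2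
    _ ≤ Real.exp (-2 * ε ^ 2 * r) + Real.exp (-2 * ε ^ 2 * r) := add_le_add hU hL
    _ = 2 * Real.exp (-2 * ε ^ 2 * r) := by ring
end

section
/- With the setup of Theorem 1, let K be hypergeometric with P(K=k) = C(n,k)·C(m,r-k)/C(m+n,r), so that E[2^{-K}] = ∑_{k=0}^{r} 2^{-k}·C(n,k)·C(m,r-k)/C(m+n,r), and let μ = rn/(m+n). Then for any ε>0, E[2^{-K}] ≤ 2^{-(μ−εr)} + 2·exp(−2ε²r). -/
open Finset Real

lemma hoeff_bern (p s : ℝ) (hp0 : 0 ≤ p) (hp1 : p ≤ 1) (hs : 0 ≤ s) :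
    p * Real.exp (-s) + (1 - p) ≤ Real.exp (-(p*s) + s^2/8) := by
  set f1 : ℝ → ℝ := fun x => 1 - p + p * Real.exp (-x) with hf1def
  have hf1pos : ∀ x : ℝ, 0 < f1 x := by
    intro x
    have hE := Real.exp_pos (-x)
    simp only [hf1def]
    rcases le_or_gt (Real.exp (-x)) 1 with hE1 | hE1
    · nlinarith
    · nlinarith
  have hf1 : ∀ x : ℝ, HasDerivAt f1 (-(p * Real.exp (-x))) x := by
    intro x
    have he : HasDerivAt (fun x : ℝ => Real.exp (-x)) (-Real.exp (-x)) x := by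
      simpa using (hasDerivAt_neg x).exp
    simp only [hf1def]
    simpa [mul_comm, mul_neg] using (he.const_mul p).const_add (1 - p)
  set h : ℝ → ℝ := fun x => -p + x/4 + p * Real.exp (-x) / f1 x with hhdef
  have hh : ∀ x : ℝ, HasDerivAt h (1/4 - p*(1-p)*Real.exp (-x) / (f1 x)^2) x := by
    intro x
    have hnum : HasDerivAt (fun x : ℝ => p * Real.exp (-x)) (-(p * Real.exp (-x))) x := by
      have he : HasDerivAt (fun x : ℝ => Real.exp (-x)) (-Real.exp (-x)) x := by
        simpa using (hasDerivAt_neg x).exp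
      simpa [mul_comm, mul_neg] using he.const_mul p
    have hq : HasDerivAt (fun x : ℝ => p * Real.exp (-x) / f1 x)
        ((-(p * Real.exp (-x)) * f1 x - p * Real.exp (-x) * (-(p * Real.exp (-x)))) / (f1 x)^2) x :=
      hnum.div (hf1 x) (hf1pos x).ne'
    have hlin : HasDerivAt (fun x : ℝ => -p + x/4) (1/4) x := by
      simpa using ((hasDerivAt_id x).div_const 4).const_add (-p)
    have : HasDerivAt (fun x : ℝ => -p + x/4 + p * Real.exp (-x) / f1 x)
        (1/4 + ((-(p * Real.exp (-x)) * f1 x - p * Real.exp (-x) * (-(p * Real.exp (-x)))) / (f1 x)^2)) x :=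
      hlin.add hq
    convert this using 1
    have : f1 x ≠ 0 := (hf1pos x).ne'
    field_simp [hf1def]
    ring
  set g : ℝ → ℝ := fun x => -(p*x) + x^2/8 - Real.log (f1 x) with hgdef
  have hg : ∀ x : ℝ, HasDerivAt g (h x) x := by
    intro x
    have h1 : HasDerivAt (fun x : ℝ => -(p*x)) (-p) x := by
      have : HasDerivAt (fun x : ℝ => -(p*x)) (-(p * 1)) x := ((hasDerivAt_id x).const_mul p).neg
      simpa using this
    have h2 : HasDerivAt (fun x : ℝ => x^2/8) (x/4) x := by
      have : HasDerivAt (fun x : ℝ => x^2/8) (((2:ℕ):ℝ) * x^(2-1) / 8) x :=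
        (hasDerivAt_pow 2 x).div_const 8
      convert this using 1; ring
    have h3 : HasDerivAt (fun x : ℝ => Real.log (f1 x)) (-(p * Real.exp (-x)) / f1 x) x :=
      (hf1 x).log (hf1pos x).ne'
    have : HasDerivAt (fun x : ℝ => -(p*x) + x^2/8 - Real.log (f1 x))
        (-p + x/4 - (-(p * Real.exp (-x)) / f1 x)) x :=
      (h1.add h2).sub h3
    convert this using 1
    simp only [hhdef]
    field_simp
    ring
  -- h is monotone, h 0 = 0
  have hmono : Monotone h := by
    apply monotone_of_deriv_nonneg
    · exact fun x => (hh x).differentiableAt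
    · intro x
      rw [(hh x).deriv]
      have hb : 0 ≤ p * Real.exp (-x) := by positivity
      have ha : 0 ≤ 1 - p := by linarith
      have hsq : 0 < (f1 x)^2 := pow_pos (hf1pos x) 2
      rw [sub_nonneg, div_le_iff₀ hsq]
      have hfx : f1 x = (1-p) + p * Real.exp (-x) := by simp [hf1def]
      nlinarith [sq_nonneg ((1-p) - p * Real.exp (-x))]
  have h0 : h 0 = 0 := by
    simp [hhdef, hf1def]
  have hgmono : MonotoneOn g (Set.Ici 0) := by
    apply monotoneOn_of_deriv_nonneg (convex_Ici 0)
    · exact (Differentiable.continuous (fun x => (hg x).differentiableAt)).continuousOn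
    · exact fun x _ => (hg x).differentiableAt.differentiableWithinAt
    · intro x hx
      rw [interior_Ici] at hx
      rw [(hg x).deriv]
      have := hmono (le_of_lt hx)
      rw [h0] at this
      exact this
  have hg0 : g 0 = 0 := by simp [hgdef, hf1def]
  have hgs : 0 ≤ g s := by
    have := hgmono (Set.self_mem_Ici) (Set.mem_Ici.mpr hs) hs
    rw [hg0] at this; exact this
  have hlog : Real.log (f1 s) ≤ -(p*s) + s^2/8 := by
    simp only [hgdef] at hgs; linarith
  have : f1 s ≤ Real.exp (-(p*s) + s^2/8) := by
    rw [← Real.exp_log (hf1pos s)]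
    exact Real.exp_le_exp.mpr hlog
  simpa [hf1def] using by linarith [this]


lemma cast_choose_mul (n j : ℕ) (hn : 1 ≤ n) :
    ((j:ℝ)+1) * (n.choose (j+1) : ℝ) = (n:ℝ) * ((n-1).choose j : ℝ) := by
  obtain ⟨n', rfl⟩ : ∃ n', n = n' + 1 := ⟨n - 1, by omega⟩
  have h : ((n' + 1 : ℕ) : ℝ) * (n'.choose j : ℝ) = ((n'+1).choose (j+1) : ℝ) * ((j+1 : ℕ) : ℝ) := by
    exact_mod_cast Nat.add_one_mul_choose_eq n' j
  simp only [Nat.add_sub_cancel]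
  push_cast at h ⊢
  linear_combination -h

lemma step_id (m n r : ℕ) (hm : 1 ≤ m) (hn : 1 ≤ n) (t : ℝ) :
    ((r:ℝ)+1) * ∑ k ∈ Finset.range (r+2),
        Real.exp (-(t*k)) * ((n.choose k : ℝ) * (m.choose (r+1-k) : ℝ))
    = (n:ℝ) * Real.exp (-t) * ∑ k ∈ Finset.range (r+1),
        Real.exp (-(t*k)) * (((n-1).choose k : ℝ) * (m.choose (r-k) : ℝ))
    + (m:ℝ) * ∑ k ∈ Finset.range (r+1),
        Real.exp (-(t*k)) * ((n.choose k : ℝ) * ((m-1).choose (r-k) : ℝ)) := by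
  have hsplit : ∀ k ∈ Finset.range (r+2),
      ((r:ℝ)+1) * (Real.exp (-(t*k)) * ((n.choose k : ℝ) * (m.choose (r+1-k) : ℝ)))
      = (k:ℝ) * (Real.exp (-(t*k)) * ((n.choose k : ℝ) * (m.choose (r+1-k) : ℝ)))
      + (((r:ℝ)+1) - (k:ℝ)) * (Real.exp (-(t*k)) * ((n.choose k : ℝ) * (m.choose (r+1-k) : ℝ))) := by
    intro k _; ring
  rw [Finset.mul_sum, Finset.sum_congr rfl hsplit, Finset.sum_add_distrib]
  congr 1
  · -- A = n e^{-t} F(m, n-1, r)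
    rw [Finset.sum_range_succ']
    simp only [Nat.cast_zero, zero_mul, add_zero]
    rw [Finset.mul_sum]
    apply Finset.sum_congr rfl
    intro j hj
    have h1 : ((j:ℝ)+1) * ((n.choose (j+1) : ℝ)) = (n:ℝ) * ((n-1).choose j : ℝ) :=
      cast_choose_mul n j hn
    have h2 : r + 1 - (j+1) = r - j := by omega
    have h3 : Real.exp (-(t*((j:ℕ)+1:ℕ))) = Real.exp (-t) * Real.exp (-(t*j)) := by
      rw [← Real.exp_add]
      push_cast
      ring_nf
    rw [h2]
    push_cast
    rw [show ((j:ℝ)+1) * (Real.exp (-(t*((j:ℝ)+1))) * ((n.choose (j+1) : ℝ) * (m.choose (r-j) : ℝ)))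
        = (((j:ℝ)+1) * (n.choose (j+1) : ℝ)) * (Real.exp (-(t*((j:ℝ)+1))) * (m.choose (r-j) : ℝ)) from by ring]
    rw [h1]
    rw [show Real.exp (-(t*((j:ℝ)+1))) = Real.exp (-t) * Real.exp (-(t*(j:ℝ))) from by
      rw [← Real.exp_add]; ring_nf]
    ring
  · -- B = m F(m-1, n, r)
    rw [Finset.sum_range_succ]
    simp only [Nat.cast_add, Nat.cast_one, sub_self, zero_mul, add_zero]
    rw [Finset.mul_sum]
    apply Finset.sum_congr rfl
    intro k hk
    have hkr : k ≤ r := by simpa [Nat.lt_succ_iff] using hk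
    have h2 : r + 1 - k = (r - k) + 1 := by omega
    have hco : ((r:ℝ) + 1 - (k:ℝ)) = ((r - k : ℕ) : ℝ) + 1 := by
      push_cast [Nat.cast_sub hkr]; ring
    rw [h2, hco]
    have h1 : (((r-k:ℕ):ℝ)+1) * ((m.choose ((r-k)+1) : ℝ)) = (m:ℝ) * ((m-1).choose (r-k) : ℝ) :=
      cast_choose_mul m (r-k) hm
    rw [show (((r-k:ℕ):ℝ)+1) * (Real.exp (-(t*k)) * ((n.choose k : ℝ) * (m.choose ((r-k)+1) : ℝ)))
        = ((((r-k:ℕ):ℝ)+1) * (m.choose ((r-k)+1) : ℝ)) * (Real.exp (-(t*k)) * (n.choose k : ℝ)) from by ring]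
    rw [h1]
    ring

set_option maxHeartbeats 1600000 in
lemma mgf_bound (r : ℕ) : ∀ m n : ℕ, r ≤ m + n → 0 < m + n → ∀ t : ℝ, 0 ≤ t →
    ∑ k ∈ Finset.range (r+1), Real.exp (-(t*k)) * ((n.choose k : ℝ) * (m.choose (r-k) : ℝ))
      ≤ ((m+n).choose r : ℝ) * Real.exp (-(t * r * n / (m+n)) + r * t^2/8) := by
  induction r with
  | zero =>
    intro m n _ hpos t ht
    simp
  | succ r ih =>
    intro m n hr hpos t ht
    by_cases hn : n = 0
    · subst hn
      have hsum : ∑ k ∈ Finset.range (r+1+1),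
          Real.exp (-(t*k)) * ((Nat.choose 0 k : ℝ) * (m.choose (r+1-k) : ℝ))
          = (m.choose (r+1) : ℝ) := by
        rw [Finset.sum_eq_single 0]
        · simp
        · intro b _ hb
          have : Nat.choose 0 b = 0 := Nat.choose_eq_zero_of_lt (by omega)
          simp [this]
        · intro h; simp at h
      rw [hsum]
      push_cast
      simp only [mul_zero, zero_div, neg_zero, zero_add, add_zero]
      have h1 : (1:ℝ) ≤ Real.exp (((r:ℝ)+1) * t^2/8) := Real.one_le_exp (by positivity)
      have h2 : (0:ℝ) ≤ (m.choose (r+1) : ℝ) := by positivity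
      nlinarith
    · by_cases hm : m = 0
      · subst hm
        have hnpos : 0 < n := by omega
        have hsum : ∑ k ∈ Finset.range (r+1+1),
            Real.exp (-(t*k)) * ((n.choose k : ℝ) * (Nat.choose 0 (r+1-k) : ℝ))
            = Real.exp (-(t*(r+1:ℕ))) * (n.choose (r+1) : ℝ) := by
          rw [Finset.sum_eq_single (r+1)]
          · simp
          · intro b hb hbne
            have hble : b ≤ r := by simp [Nat.lt_succ_iff] at hb; omega
            have : Nat.choose 0 (r+1-b) = 0 := Nat.choose_eq_zero_of_lt (by omega)
            simp [this]
          · intro h; simp at h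
        rw [hsum]
        simp only [Nat.zero_add]
        push_cast
        rw [zero_add]
        have hne : ((n:ℝ)) ≠ 0 := by positivity
        rw [mul_div_assoc, div_self hne]
        rw [mul_comm]
        apply mul_le_mul_of_nonneg_left _ (by positivity)
        apply Real.exp_le_exp.mpr
        nlinarith [sq_nonneg t]
      · -- main case
        have hm1 : 1 ≤ m := by omega
        have hn1 : 1 ≤ n := by omega
        have IH1 := ih m (n-1) (by omega) (by omega) t ht
        have IH2 := ih (m-1) n (by omega) (by omega) t ht
        have hid := step_id m n r hm1 hn1 t
        set Nr : ℝ := (m:ℝ) + (n:ℝ) with hNrdef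
        have hN2 : (2:ℝ) ≤ Nr := by
          have h2 : (2:ℕ) ≤ m + n := by omega
          rw [hNrdef]; exact_mod_cast h2
        have hN1 : (0:ℝ) < Nr - 1 := by linarith
        have hN0 : (0:ℝ) < Nr := by linarith
        have hrle : (r:ℝ) ≤ Nr - 1 := by
          have : (r:ℝ) + 1 ≤ Nr := by rw [hNrdef]; exact_mod_cast hr
          linarith
        have hcn : (((n-1) : ℕ) : ℝ) = (n:ℝ) - 1 := by
          rw [Nat.cast_sub hn1, Nat.cast_one]
        have hcm : (((m-1) : ℕ) : ℝ) = (m:ℝ) - 1 := by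
          rw [Nat.cast_sub hm1, Nat.cast_one]
        have hch1 : (m + (n-1)) = m + n - 1 := by omega
        have hch2 : ((m-1) + n) = m + n - 1 := by omega
        rw [hch1, hcn] at IH1
        rw [hch2, hcm] at IH2
        have e1 : (m:ℝ) + ((n:ℝ) - 1) = Nr - 1 := by rw [hNrdef]; ring
        have e2 : ((m:ℝ) - 1) + (n:ℝ) = Nr - 1 := by rw [hNrdef]; ring
        rw [e1] at IH1
        rw [e2] at IH2
        set CN1 : ℝ := ((m+n-1).choose r : ℝ) with hCN1def
        have hCN1nn : (0:ℝ) ≤ CN1 := by positivity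
        set s : ℝ := t * ((Nr - 1 - r) / (Nr - 1)) with hsdef
        have hs0 : 0 ≤ s := by
          apply mul_nonneg ht
          apply div_nonneg (by linarith) (by linarith)
        have hst : s ≤ t := by
          rw [hsdef]
          have hle1 : (Nr - 1 - r) / (Nr - 1) ≤ 1 := by
            rw [div_le_one hN1]
            have : (0:ℝ) ≤ (r:ℝ) := Nat.cast_nonneg r
            linarith
          nlinarith
        set E2 : ℝ := Real.exp (-(t*r*(n:ℝ)/(Nr-1)) + r*t^2/8) with hE2def
        set E1 : ℝ := Real.exp (-(t*r*((n:ℝ)-1)/(Nr-1)) + r*t^2/8) with hE1def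
        have hA : Real.exp (-t) * E1 = Real.exp (-s) * E2 := by
          rw [hE1def, hE2def, ← Real.exp_add, ← Real.exp_add]
          congr 1
          rw [hsdef]
          field_simp
          ring
        set p : ℝ := (n:ℝ) / Nr with hpdef
        clear_value Nr CN1 s E2 E1 p
        have hp0 : 0 ≤ p := by rw [hpdef]; positivity
        have hp1 : p ≤ 1 := by
          rw [hpdef, div_le_one hN0, hNrdef]
          have : (0:ℝ) ≤ (m:ℝ) := by positivity
          linarith
        have hhoeff := hoeff_bern p s hp0 hp1 hs0
        have hB : (n:ℝ) * Real.exp (-s) + (m:ℝ) ≤ Nr * Real.exp (-(p*s) + s^2/8) := by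
          have h1 : Nr * p = (n:ℝ) := by
            rw [hpdef]; exact mul_div_cancel₀ _ hN0.ne'
          have h2 : Nr * (1 - p) = (m:ℝ) := by
            rw [hpdef, mul_sub, mul_one, mul_div_cancel₀ _ hN0.ne', hNrdef]; ring
          have h4 : Nr * (p * Real.exp (-s) + (1 - p)) = (n:ℝ) * Real.exp (-s) + (m:ℝ) := by
            rw [mul_add, ← mul_assoc, h1, h2]
          have h3 := mul_le_mul_of_nonneg_left hhoeff hN0.le
          linarith
        have hC : Real.exp (-(p*s) + s^2/8) * E2
            ≤ Real.exp (-(t * ((r:ℝ)+1) * (n:ℝ) / Nr) + ((r:ℝ)+1) * t^2/8) := by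
          rw [hE2def, ← Real.exp_add]
          apply Real.exp_le_exp.mpr
          have heq : -(p*s) + (-(t*r*(n:ℝ)/(Nr-1))) = -(t * ((r:ℝ)+1) * (n:ℝ) / Nr) := by
            clear hid IH1 IH2 hhoeff hB hE1def hE2def hA
            rw [hpdef, hsdef]
            field_simp
            ring
          have hsq : s^2 ≤ t^2 := by nlinarith
          nlinarith [heq, hsq]
        have hD : Nr * CN1 = ((r:ℝ)+1) * ((m+n).choose (r+1) : ℝ) := by
          have hmn : m + n = (m+n-1) + 1 := by omega
          have hnat := Nat.add_one_mul_choose_eq (m+n-1) r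
          rw [← hmn] at hnat
          have hcast : ((m+n:ℕ):ℝ) * ((m+n-1).choose r : ℝ) = ((m+n).choose (r+1) : ℝ) * ((r:ℝ)+1) := by
            exact_mod_cast hnat
          rw [hCN1def, hNrdef]
          push_cast at hcast ⊢
          linarith [hcast]
        have hrpos : (0:ℝ) < (r:ℝ) + 1 := by positivity
        rw [← mul_le_mul_iff_right₀ hrpos]
        calc ((r:ℝ)+1) * ∑ k ∈ Finset.range (r+1+1),
              Real.exp (-(t*k)) * ((n.choose k : ℝ) * (m.choose (r+1-k) : ℝ))
            = (n:ℝ) * Real.exp (-t) * (∑ k ∈ Finset.range (r+1),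
                Real.exp (-(t*k)) * (((n-1).choose k : ℝ) * (m.choose (r-k) : ℝ)))
              + (m:ℝ) * (∑ k ∈ Finset.range (r+1),
                Real.exp (-(t*k)) * ((n.choose k : ℝ) * ((m-1).choose (r-k) : ℝ))) := hid
          _ ≤ (n:ℝ) * Real.exp (-t) * (CN1 * E1) + (m:ℝ) * (CN1 * E2) := by
              apply add_le_add
              · apply mul_le_mul_of_nonneg_left IH1 (by positivity)
              · apply mul_le_mul_of_nonneg_left IH2 (by positivity)
          _ = CN1 * (((n:ℝ) * Real.exp (-s) + (m:ℝ)) * E2) := by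
              have hx : (n:ℝ) * Real.exp (-t) * (CN1 * E1) = (n:ℝ) * CN1 * (Real.exp (-t) * E1) := by ring
              rw [hx, hA]; ring
          _ ≤ CN1 * ((Nr * Real.exp (-(p*s) + s^2/8)) * E2) := by
              apply mul_le_mul_of_nonneg_left _ hCN1nn
              have hE2nn : 0 ≤ E2 := by rw [hE2def]; positivity
              exact mul_le_mul_of_nonneg_right hB hE2nn
          _ = (Nr * CN1) * (Real.exp (-(p*s) + s^2/8) * E2) := by ring
          _ ≤ (Nr * CN1) * Real.exp (-(t * ((r:ℝ)+1) * (n:ℝ) / Nr) + ((r:ℝ)+1) * t^2/8) := by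
              apply mul_le_mul_of_nonneg_left hC (by positivity)
          _ = ((r:ℝ)+1) * (((m+n).choose (r+1) : ℝ) *
                Real.exp (-(t * (((r+1:ℕ)):ℝ) * (n:ℝ) / Nr) + (((r+1:ℕ)):ℝ) * t^2/8)) := by
              push_cast
              rw [hD]
              ring


/-- with `K` hypergeometric with population `m+n`, `n` marked items and
`r` draws, and `μ = r·n/(m+n)`, for any `ε > 0`,
`E[2^{-K}] ≤ 2^{-(μ − εr)} + 2·exp(−2ε²r)`. -/
theorem stmt4 (m n r : ℕ) (hr : r ≤ m + n) (hpos : 0 < m + n)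
    (ε : ℝ) (hε : 0 < ε) :
    (∑ k ∈ Finset.range (r + 1),
        (2 : ℝ) ^ (-(k : ℝ)) * (n.choose k * m.choose (r - k) : ℝ)
          / ((m + n).choose r : ℝ))
      ≤ (2 : ℝ) ^ (-((r : ℝ) * n / (m + n) - ε * r))
          + 2 * Real.exp (-2 * ε ^ 2 * r) := by
  set a : ℝ := (r : ℝ) * n / (m + n) - ε * r with hadef
  set t : ℝ := 4 * ε with htdef
  have ht0 : 0 ≤ t := by rw [htdef]; positivity
  have hCpos : (0:ℝ) < ((m+n).choose r : ℝ) := by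
    exact_mod_cast Nat.choose_pos hr
  have hvdm : ∑ k ∈ Finset.range (r+1), ((n.choose k : ℝ) * (m.choose (r-k) : ℝ))
      = ((m+n).choose r : ℝ) := by
    have hv : (m+n).choose r = ∑ k ∈ Finset.range (r+1), n.choose k * m.choose (r-k) := by
      rw [add_comm m n, Nat.add_choose_eq, Finset.Nat.sum_antidiagonal_eq_sum_range_succ_mk]
    rw [hv]
    push_cast
    rfl
  have hterm : ∀ k : ℕ, (2:ℝ)^(-(k:ℝ)) ≤ (2:ℝ)^(-a) + Real.exp (t*a) * Real.exp (-(t*(k:ℝ))) := by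
    intro k
    rcases le_or_gt a (k:ℝ) with h | h
    · have h1 : (2:ℝ)^(-(k:ℝ)) ≤ (2:ℝ)^(-a) :=
        (Real.rpow_le_rpow_left_iff (by norm_num : (1:ℝ) < 2)).mpr (by linarith)
      have h2 : (0:ℝ) ≤ Real.exp (t*a) * Real.exp (-(t*(k:ℝ))) := by positivity
      linarith
    · have h1 : (2:ℝ)^(-(k:ℝ)) ≤ 1 := by
        apply Real.rpow_le_one_of_one_le_of_nonpos (by norm_num)
        simp [Nat.cast_nonneg]
      have h2 : (1:ℝ) ≤ Real.exp (t*a) * Real.exp (-(t*(k:ℝ))) := by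
        rw [← Real.exp_add]
        apply Real.one_le_exp
        have htpos : 0 < t := by rw [htdef]; positivity
        nlinarith
      have h3 : (0:ℝ) ≤ (2:ℝ)^(-a) := Real.rpow_nonneg (by norm_num) _
      linarith
  have hsplit : (∑ k ∈ Finset.range (r + 1),
        (2 : ℝ) ^ (-(k : ℝ)) * (n.choose k * m.choose (r - k) : ℝ)
          / ((m + n).choose r : ℝ))
      ≤ (∑ k ∈ Finset.range (r+1),
          (2:ℝ)^(-a) * ((n.choose k : ℝ) * (m.choose (r-k) : ℝ)) / ((m+n).choose r : ℝ))
        + (∑ k ∈ Finset.range (r+1),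
          Real.exp (t*a) * (Real.exp (-(t*(k:ℝ))) * ((n.choose k : ℝ) * (m.choose (r-k) : ℝ)))
            / ((m+n).choose r : ℝ)) := by
    rw [← Finset.sum_add_distrib]
    apply Finset.sum_le_sum
    intro k _
    rw [← add_div]
    rw [div_le_div_iff_of_pos_right hCpos]
    have hw : (0:ℝ) ≤ (n.choose k : ℝ) * (m.choose (r-k) : ℝ) := by positivity
    have := mul_le_mul_of_nonneg_right (hterm k) hw
    nlinarith [this]
  have h1 : (∑ k ∈ Finset.range (r+1),
      (2:ℝ)^(-a) * ((n.choose k : ℝ) * (m.choose (r-k) : ℝ)) / ((m+n).choose r : ℝ))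
      = (2:ℝ)^(-a) := by
    rw [← Finset.sum_div, ← Finset.mul_sum, hvdm, mul_div_assoc, div_self hCpos.ne', mul_one]
  have h2 : (∑ k ∈ Finset.range (r+1),
      Real.exp (t*a) * (Real.exp (-(t*(k:ℝ))) * ((n.choose k : ℝ) * (m.choose (r-k) : ℝ)))
        / ((m+n).choose r : ℝ)) ≤ Real.exp (-2 * ε^2 * r) := by
    have hmgf := mgf_bound r m n hr hpos t ht0
    rw [← Finset.sum_div, ← Finset.mul_sum]
    have hle : Real.exp (t*a) * (∑ k ∈ Finset.range (r+1),
        Real.exp (-(t*(k:ℝ))) * ((n.choose k : ℝ) * (m.choose (r-k) : ℝ)))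
        ≤ Real.exp (t*a) * (((m+n).choose r : ℝ) * Real.exp (-(t * r * n / (m+n)) + r * t^2/8)) :=
      mul_le_mul_of_nonneg_left hmgf (Real.exp_pos _).le
    calc Real.exp (t*a) * (∑ k ∈ Finset.range (r+1),
          Real.exp (-(t*(k:ℝ))) * ((n.choose k : ℝ) * (m.choose (r-k) : ℝ))) / ((m+n).choose r : ℝ)
        ≤ Real.exp (t*a) * (((m+n).choose r : ℝ) * Real.exp (-(t * r * n / (m+n)) + r * t^2/8))
            / ((m+n).choose r : ℝ) := by
          rw [div_le_div_iff_of_pos_right hCpos]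
          exact hle
      _ = Real.exp (t*a) * Real.exp (-(t * r * n / (m+n)) + r * t^2/8) := by
          field_simp
      _ = Real.exp (-2 * ε^2 * r) := by
          rw [← Real.exp_add]
          congr 1
          rw [hadef, htdef]
          ring
  have hexp : (0:ℝ) < Real.exp (-2 * ε^2 * r) := Real.exp_pos _
  linarith [hsplit, h1, h2]
end

section
/- The function r ↦ ∑_{k=0}^{r} 2^{-k}·C(n,k)·C(m,r-k)/C(m+n,r) is monotonically non-increasing in r for 0 ≤ r ≤ m+n (fixed m, n). -/
/-!
Write `S r = ∑_{i+j=r} w i C(n,i) C(m,j)`. Splitting the factor `r+1 = i + j` in `(r+1) S(r+1)` and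
using `(j+1) C(m,j+1) = (m-j) C(m,j)` on one half and `(i+1) C(n,i+1) = (n-i) C(n,i)` on the other gives
`(r+1) S(r+1) = ∑_{i+j=r} C(n,i) C(m,j) (w i (m-j) + w (i+1) (n-i))`, which is at most
`(m+n-r) S r` as soon as `w` is antitone. Since `(r+1) C(m+n,r+1) = (m+n-r) C(m+n,r)`, the mean
`S r / C(m+n,r)` does not increase with `r`; the theorem is the case `w k = 2^{-k}`.
-/

open Finset

theorem Nat.cast_choose_succ_right_mul {R : Type*} [CommRing R] (a j : ℕ) :
    (a.choose (j + 1) : R) * (j + 1) = a.choose j * (a - j) := by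
  rcases le_or_gt j a with h | h
  · have := congrArg (Nat.cast : ℕ → R) (Nat.choose_succ_right_eq a j)
    push_cast [h] at this
    exact this
  · simp [Nat.choose_eq_zero_of_lt h, Nat.choose_eq_zero_of_lt (Nat.lt_succ_of_lt h)]

section Hypergeometric

variable (w : ℕ → ℝ) (m n : ℕ)

noncomputable def hypergeomSum (r : ℕ) : ℝ :=
  ∑ p ∈ antidiagonal r, w p.1 * (n.choose p.1 * m.choose p.2)

/-- `E[w K_r]` for `K_r` hypergeometric: `r` draws from `m+n` items, `n` of them marked. -/
noncomputable def hypergeomMean (r : ℕ) : ℝ :=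
  hypergeomSum w m n r / (m + n).choose r

theorem succ_mul_hypergeomSum_succ (r : ℕ) :
    (r + 1) * hypergeomSum w m n (r + 1) =
      ∑ p ∈ antidiagonal r,
        (n.choose p.1 * m.choose p.2) * (w p.1 * (m - p.2) + w (p.1 + 1) * (n - p.1)) := by
  have hsplit : (r + 1) * hypergeomSum w m n (r + 1) =
      (∑ p ∈ antidiagonal (r + 1), w p.1 * n.choose p.1 * (m.choose p.2 * p.2)) +
        ∑ p ∈ antidiagonal (r + 1), w p.1 * m.choose p.2 * (n.choose p.1 * p.1) := by
    rw [hypergeomSum, mul_sum, ← sum_add_distrib]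
    refine sum_congr rfl fun p hp => ?_
    have hr : (r : ℝ) + 1 = p.1 + p.2 := by exact_mod_cast (mem_antidiagonal.mp hp).symm
    rw [hr]
    ring
  rw [hsplit, Nat.sum_antidiagonal_succ', Nat.sum_antidiagonal_succ]
  simp only [Nat.cast_add, Nat.cast_one, Nat.cast_zero, mul_zero, zero_add,
    Nat.cast_choose_succ_right_mul]
  rw [← sum_add_distrib]
  exact sum_congr rfl fun _ _ => by ring

variable {w}

theorem succ_mul_hypergeomSum_succ_le (hw : Antitone w) (r : ℕ) :
    (r + 1) * hypergeomSum w m n (r + 1) ≤ (m + n - r) * hypergeomSum w m n r := by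
  rw [succ_mul_hypergeomSum_succ, hypergeomSum, mul_sum]
  refine sum_le_sum fun p hp => ?_
  have hr : (r : ℝ) = p.1 + p.2 := by exact_mod_cast (mem_antidiagonal.mp hp).symm
  have hn : 0 ≤ (n.choose p.1 : ℝ) * (n - p.1) := by
    rw [← Nat.cast_choose_succ_right_mul]
    positivity
  have hw' : w (p.1 + 1) ≤ w p.1 := hw (Nat.le_succ _)
  rw [hr]
  nlinarith [mul_le_mul_of_nonneg_left hw' (mul_nonneg hn (Nat.cast_nonneg (m.choose p.2)))]

theorem hypergeomMean_succ_le (hw : Antitone w) {r : ℕ} (hr : r < m + n) :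
    hypergeomMean w m n (r + 1) ≤ hypergeomMean w m n r := by
  have hpos : (0 : ℝ) < m + n - r := by
    rw [sub_pos]
    exact_mod_cast hr
  have hchoose_pos : (0 : ℝ) < (m + n).choose r := by exact_mod_cast Nat.choose_pos hr.le
  have hchoose : ((m + n).choose (r + 1) : ℝ) * (r + 1) = (m + n).choose r * (m + n - r) := by
    exact_mod_cast Nat.cast_choose_succ_right_mul (m + n) r
  calc hypergeomMean w m n (r + 1)
      = (r + 1) * hypergeomSum w m n (r + 1) / ((m + n - r) * (m + n).choose r) := by
        rw [hypergeomMean, mul_comm (m + n - r : ℝ), ← hchoose, mul_comm _ ((r : ℝ) + 1),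
          mul_div_mul_left _ _ (by positivity)]
    _ ≤ (m + n - r) * hypergeomSum w m n r / ((m + n - r) * (m + n).choose r) := by
        exact div_le_div_of_nonneg_right (succ_mul_hypergeomSum_succ_le m n hw r)
          (mul_pos hpos hchoose_pos).le
    _ = hypergeomMean w m n r := mul_div_mul_left _ _ hpos.ne'

theorem antitoneOn_hypergeomMean (hw : Antitone w) :
    AntitoneOn (hypergeomMean w m n) (Set.Iic (m + n)) :=
  antitoneOn_of_succ_le Set.ordConnected_Iic fun r _ _ hr => by
    rw [Order.succ_eq_add_one] at hr ⊢
    exact hypergeomMean_succ_le m n hw (Set.mem_Iic.mp hr)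

end Hypergeometric

/-- for fixed `m, n`, the function
`r ↦ ∑_{k=0}^r 2^{-k} C(n,k)C(m,r-k)/C(m+n,r)` is monotonically non-increasing
in `r` for `0 ≤ r ≤ m+n`. -/
theorem stmt10 (m n : ℕ) (r₁ r₂ : ℕ) (h12 : r₁ ≤ r₂) (h2 : r₂ ≤ m + n) :
    (∑ k ∈ Finset.range (r₂ + 1),
        (2 : ℝ) ^ (-(k : ℝ)) * (n.choose k * m.choose (r₂ - k) : ℝ)
          / ((m + n).choose r₂ : ℝ))
      ≤ ∑ k ∈ Finset.range (r₁ + 1),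
          (2 : ℝ) ^ (-(k : ℝ)) * (n.choose k * m.choose (r₁ - k) : ℝ)
            / ((m + n).choose r₁ : ℝ) := by
  have hw : Antitone fun k : ℕ => (2 : ℝ) ^ (-(k : ℝ)) := fun i j hij =>
    Real.rpow_le_rpow_of_exponent_le one_le_two (by simpa using hij)
  have hmean (r : ℕ) : hypergeomMean (fun k : ℕ => (2 : ℝ) ^ (-(k : ℝ))) m n r =
      ∑ k ∈ range (r + 1),
        (2 : ℝ) ^ (-(k : ℝ)) * (n.choose k * m.choose (r - k) : ℝ) / ((m + n).choose r : ℝ) := by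
    rw [hypergeomMean, hypergeomSum, Nat.sum_antidiagonal_eq_sum_range_succ_mk, sum_div]
  rw [← hmean, ← hmean]
  exact antitoneOn_hypergeomMean m n hw (Set.mem_Iic.mpr (h12.trans h2)) (Set.mem_Iic.mpr h2) h12
end

section
/- Let K be hypergeometric with population m+n, n marked, r draws where r = c·(m+n) for a constant c ∈ (0,1]. Then E[2^{-K}] → 0 as n → ∞ (with m = m(n) such that n/(m+n) → α > 0), and in particular E[2^{-K}] ≤ 2^{-cαn/2} + 2exp(−c·α²n/2) for n large enough. -/
open Finset Filter Real

/-- The expectation `E[2^{-K}]` for `K` hypergeometric with population `m+n`,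
`n` marked items, and `r` draws. -/
noncomputable def expTwoPowNegK (m n r : ℕ) : ℝ :=
  ∑ k ∈ Finset.range (r + 1),
    (2 : ℝ) ^ (-(k : ℝ)) * (n.choose k * m.choose (r - k) : ℝ)
      / ((m + n).choose r : ℝ)

/-- Each term of the binomial expansion of `N^N = (r + (N-r))^N` is at most the `r`-th term. -/
lemma term_le_max (N r j : ℕ) (hr : r < N) (hj : j ≤ N) :
    N.choose j * (r ^ j * (N - r) ^ (N - j)) ≤ N.choose r * (r ^ r * (N - r) ^ (N - r)) := by
  set u : ℕ → ℕ := fun i => N.choose i * (r ^ i * (N - r) ^ (N - i)) with hu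
  have step_up : ∀ i, i < r → u i ≤ u (i + 1) := by
    intro i hi
    have hiN : i < N := hi.trans hr
    have hpos : 0 < (i + 1) * (N - r) := by
      have : 0 < N - r := Nat.sub_pos_of_lt hr
      positivity
    refine Nat.le_of_mul_le_mul_right ?_ hpos
    have hNi : N - i = (N - (i + 1)) + 1 := by omega
    have key : (i + 1) * (N - r) ≤ (N - i) * r := by
      have h1 : i + 1 ≤ r := hi
      have h2 : N - r ≤ N - i := by omega
      calc (i + 1) * (N - r) ≤ r * (N - i) := Nat.mul_le_mul h1 h2
        _ = (N - i) * r := Nat.mul_comm _ _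
    calc u i * ((i + 1) * (N - r))
        = N.choose i * (r ^ i * (N - r) ^ (N - i)) * ((i + 1) * (N - r)) := rfl
      _ ≤ N.choose i * (r ^ i * (N - r) ^ (N - i)) * ((N - i) * r) := by
          exact Nat.mul_le_mul_left _ key
      _ = (N.choose i * (N - i)) * (r ^ (i + 1) * (N - r) ^ (N - i)) := by ring
      _ = (N.choose (i + 1) * (i + 1)) * (r ^ (i + 1) * (N - r) ^ (N - i)) := by
          rw [Nat.choose_succ_right_eq]
      _ = (N.choose (i + 1) * (r ^ (i + 1) * ((N - r) ^ (N - (i + 1)) * (N - r)))) * (i + 1) := by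
          rw [hNi, pow_succ]; ring
      _ = u (i + 1) * ((i + 1) * (N - r)) := by simp only [hu, pow_succ]; ring
  have step_down : ∀ i, r ≤ i → i < N → u (i + 1) ≤ u i := by
    intro i hri hiN
    have hpos : 0 < i + 1 := Nat.succ_pos i
    refine Nat.le_of_mul_le_mul_right ?_ hpos
    have hNi : N - i = (N - (i + 1)) + 1 := by omega
    have key : (N - i) * r ≤ (N - r) * (i + 1) := by
      have h1 : N - i ≤ N - r := by omega
      have h2 : r ≤ i + 1 := by omega
      exact Nat.mul_le_mul h1 h2
    calc u (i + 1) * (i + 1)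
        = (N.choose (i + 1) * (i + 1)) * (r ^ (i + 1) * (N - r) ^ (N - (i + 1))) := by ring
      _ = (N.choose i * (N - i)) * (r ^ (i + 1) * (N - r) ^ (N - (i + 1))) := by
          rw [Nat.choose_succ_right_eq]
      _ = N.choose i * (r ^ i * (N - r) ^ (N - (i + 1))) * ((N - i) * r) := by
          rw [pow_succ]; ring
      _ ≤ N.choose i * (r ^ i * (N - r) ^ (N - (i + 1))) * ((N - r) * (i + 1)) := by
          exact Nat.mul_le_mul_left _ key
      _ = N.choose i * (r ^ i * ((N - r) ^ (N - (i + 1)) * (N - r))) * (i + 1) := by ring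
      _ = u i * (i + 1) := by rw [hu]; simp only [hNi, pow_succ]
  rcases le_or_gt j r with h | h
  · -- j ≤ r : go up
    have up : ∀ d, d ≤ r → u (r - d) ≤ u r := by
      intro d
      induction d with
      | zero => intro _; simp
      | succ d ih =>
        intro hd
        have h1 : u (r - (d + 1)) ≤ u (r - (d + 1) + 1) := step_up _ (by omega)
        have h2 : r - (d + 1) + 1 = r - d := by omega
        rw [h2] at h1
        exact h1.trans (ih (by omega))
    have := up (r - j) (by omega)
    rwa [Nat.sub_sub_self h] at this
  · -- r < j : go down
    have down : ∀ i, r ≤ i → i ≤ N → u i ≤ u r := by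
      intro i
      induction i with
      | zero => intro h1 _; simp_all
      | succ i ih =>
        intro h1 h2
        rcases Nat.lt_or_ge r (i + 1) with h3 | h3
        · have hri : r ≤ i := by omega
          exact (step_down i hri (by omega)).trans (ih hri (by omega))
        · have : r = i + 1 := by omega
          simp [this]
    exact down j h.le hj

lemma lemB_nat (N r : ℕ) (hr : r < N) :
    N ^ N ≤ (N + 1) * (N.choose r * (r ^ r * (N - r) ^ (N - r))) := by
  have hb : (r + (N - r)) ^ N = ∑ j ∈ range (N + 1), r ^ j * (N - r) ^ (N - j) * N.choose j :=
    add_pow r (N - r) N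
  rw [Nat.add_sub_cancel' hr.le] at hb
  rw [hb]
  calc ∑ j ∈ range (N + 1), r ^ j * (N - r) ^ (N - j) * N.choose j
      ≤ ∑ _j ∈ range (N + 1), N.choose r * (r ^ r * (N - r) ^ (N - r)) := by
        refine Finset.sum_le_sum fun j hj => ?_
        have := term_le_max N r j hr (by simpa [Nat.lt_succ_iff] using Finset.mem_range.mp hj)
        linarith [this]
    _ = (N + 1) * (N.choose r * (r ^ r * (N - r) ^ (N - r))) := by
        rw [Finset.sum_const, Finset.card_range, smul_eq_mul]

/-- single binomial term bound -/
lemma choose_mul_pow_le (n k : ℕ) (y : ℝ) (hy : 0 ≤ y) :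
    (n.choose k : ℝ) * y ^ k ≤ (1 + y) ^ n := by
  rcases le_or_gt k n with h | h
  · have hpow : (y + 1) ^ n = ∑ i ∈ range (n + 1), y ^ i * 1 ^ (n - i) * (n.choose i : ℝ) :=
      add_pow y 1 n
    have h1 : (1 + y) ^ n = ∑ i ∈ range (n + 1), y ^ i * 1 ^ (n - i) * (n.choose i : ℝ) := by
      rw [add_comm]; exact hpow
    rw [h1]
    have : (n.choose k : ℝ) * y ^ k = y ^ k * 1 ^ (n - k) * (n.choose k : ℝ) := by ring
    rw [this]
    refine Finset.single_le_sum (f := fun i => y ^ i * 1 ^ (n - i) * (n.choose i : ℝ))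
      (fun i _ => by positivity) (Finset.mem_range.mpr (Nat.lt_succ_of_le h))
  · rw [Nat.choose_eq_zero_of_lt h]
    simp
    positivity

/-- partial binomial sum bound -/
lemma sum_choose_pow_le (m r : ℕ) (y : ℝ) (hy : 0 ≤ y) :
    ∑ j ∈ range (r + 1), (m.choose j : ℝ) * y ^ j ≤ (1 + y) ^ m := by
  have h1 : ∑ j ∈ range (r + 1), (m.choose j : ℝ) * y ^ j
      ≤ ∑ j ∈ range (r + m + 2), (m.choose j : ℝ) * y ^ j := by
    refine Finset.sum_le_sum_of_subset_of_nonneg ?_ (fun j _ _ => by positivity)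
    exact Finset.range_subset_range.mpr (by omega)
  have h2 : ∑ j ∈ range (m + 1), (m.choose j : ℝ) * y ^ j
      = ∑ j ∈ range (r + m + 2), (m.choose j : ℝ) * y ^ j := by
    refine Finset.sum_subset (Finset.range_subset_range.mpr (by omega)) ?_
    intro j _ hj
    have : m < j := by
      by_contra h
      exact hj (Finset.mem_range.mpr (by omega))
    rw [Nat.choose_eq_zero_of_lt this]; simp
  have h3 : (1 + y) ^ m = ∑ j ∈ range (m + 1), (m.choose j : ℝ) * y ^ j := by
    rw [add_comm]
    rw [add_pow y 1 m]
    refine Finset.sum_congr rfl fun j _ => by ring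
  rw [h3, h2]; exact h1

/-- Lemma A: generating function bound for the hypergeometric numerator. -/
lemma lemA (m n r : ℕ) (x : ℝ) (hx : 0 ≤ x) :
    (∑ k ∈ range (r + 1), (2 : ℝ) ^ (-(k : ℝ)) * (n.choose k * m.choose (r - k) : ℝ)) * x ^ r
      ≤ (1 + x / 2) ^ n * (1 + x) ^ m := by
  have hrw : ∀ k ∈ range (r + 1),
      (2 : ℝ) ^ (-(k : ℝ)) * (n.choose k * m.choose (r - k) : ℝ) * x ^ r
        = ((n.choose k : ℝ) * (x / 2) ^ k) * ((m.choose (r - k) : ℝ) * x ^ (r - k)) := by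
    intro k hk
    have hk' : k ≤ r := by simpa [Nat.lt_succ_iff] using Finset.mem_range.mp hk
    have h2 : (2 : ℝ) ^ (-(k : ℝ)) = (1 / 2 : ℝ) ^ k := by
      rw [Real.rpow_neg (by norm_num), Real.rpow_natCast]
      simp
    have hxr : x ^ r = x ^ k * x ^ (r - k) := by
      rw [← pow_add]; congr 1; omega
    rw [h2, hxr]
    rw [div_pow, div_pow]
    ring
  rw [Finset.sum_mul]
  rw [Finset.sum_congr rfl hrw]
  calc ∑ k ∈ range (r + 1), ((n.choose k : ℝ) * (x / 2) ^ k) * ((m.choose (r - k) : ℝ) * x ^ (r - k))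
      ≤ ∑ k ∈ range (r + 1), (1 + x / 2) ^ n * ((m.choose (r - k) : ℝ) * x ^ (r - k)) := by
        refine Finset.sum_le_sum fun k _ => ?_
        refine mul_le_mul_of_nonneg_right (choose_mul_pow_le n k (x / 2) (by positivity))
          (by positivity)
    _ = (1 + x / 2) ^ n * ∑ k ∈ range (r + 1), (m.choose (r - k) : ℝ) * x ^ (r - k) := by
        rw [Finset.mul_sum]
    _ ≤ (1 + x / 2) ^ n * (1 + x) ^ m := by
        refine mul_le_mul_of_nonneg_left ?_ (by positivity)
        have hrefl : ∑ k ∈ range (r + 1), (m.choose (r - k) : ℝ) * x ^ (r - k)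
            = ∑ j ∈ range (r + 1), (m.choose j : ℝ) * x ^ j := by
          have := Finset.sum_range_reflect (fun j => (m.choose j : ℝ) * x ^ j) (r + 1)
          simpa using this
        rw [hrefl]
        exact sum_choose_pow_le m r x hx

lemma lemB_real (N r : ℕ) (hr : r < N) :
    (1 + (r : ℝ) / ((N : ℝ) - r)) ^ N
      ≤ ((N : ℝ) + 1) * (N.choose r : ℝ) * ((r : ℝ) / ((N : ℝ) - r)) ^ r := by
  set y : ℝ := (N : ℝ) - r with hy
  have hy0 : 0 < y := by
    rw [hy]; have : (r : ℝ) < N := by exact_mod_cast hr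
    linarith
  have hxy : (1 + (r : ℝ) / y) * y = y + r := by field_simp
  have hcast : ((N - r : ℕ) : ℝ) = y := by
    rw [hy]; exact_mod_cast Nat.cast_sub hr.le
  have hN : (N : ℝ) ^ N ≤ ((N : ℝ) + 1) * ((N.choose r : ℝ) * ((r : ℝ) ^ r * y ^ (N - r))) := by
    have h2 : ((N ^ N : ℕ) : ℝ)
        ≤ (((N + 1) * (N.choose r * (r ^ r * (N - r) ^ (N - r))) : ℕ) : ℝ) := by
      exact_mod_cast lemB_nat N r hr
    push_cast at h2
    rwa [hcast] at h2
  have hyN : y ^ N = y ^ r * y ^ (N - r) := by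
    rw [← pow_add]; congr 1; omega
  have key : (1 + (r : ℝ) / y) ^ N * y ^ N
      ≤ (((N : ℝ) + 1) * (N.choose r : ℝ) * ((r : ℝ) / y) ^ r) * y ^ N := by
    have hL : (1 + (r : ℝ) / y) ^ N * y ^ N = (y + r) ^ N := by
      rw [← mul_pow, hxy]
    have hyr : (y : ℝ) + r = N := by rw [hy]; ring
    have hR : (((N : ℝ) + 1) * (N.choose r : ℝ) * ((r : ℝ) / y) ^ r) * y ^ N
        = ((N : ℝ) + 1) * ((N.choose r : ℝ) * ((r : ℝ) ^ r * y ^ (N - r))) := by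
      rw [hyN, div_pow]
      field_simp
    rw [hL, hyr, hR]
    exact hN
  exact le_of_mul_le_mul_right key (pow_pos hy0 N)

/-- Key bound: `E[2^{-K}] ≤ (N+1)·((2N-r)/(2N))^n` where `N = m+n`. -/
lemma keyBound (m n r : ℕ) (hN : 0 < m + n) (hr : r ≤ m + n) :
    expTwoPowNegK m n r
      ≤ ((m : ℝ) + n + 1) * ((2 * ((m : ℝ) + n) - r) / (2 * ((m : ℝ) + n))) ^ n := by
  set S : ℝ := ∑ k ∈ range (r + 1), (2 : ℝ) ^ (-(k : ℝ)) * (n.choose k * m.choose (r - k) : ℝ)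
    with hSdef
  have hNr0 : (0 : ℝ) < (m : ℝ) + n := by exact_mod_cast hN
  have hS : expTwoPowNegK m n r = S / ((m + n).choose r : ℝ) := by
    rw [expTwoPowNegK, hSdef, Finset.sum_div]
  rcases eq_or_lt_of_le hr with heq | hlt
  · -- r = m + n
    subst heq
    have hval : expTwoPowNegK m n (m + n) = (2 : ℝ) ^ (-(n : ℝ)) := by
      rw [expTwoPowNegK]
      rw [Finset.sum_eq_single_of_mem n (Finset.mem_range.mpr (by omega))]
      · simp [Nat.choose_self, show m + n - n = m from by omega]
      · intro b _ hb
        rcases Nat.lt_or_ge b n with h | h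
        · rw [Nat.choose_eq_zero_of_lt (show m < m + n - b from by omega)]
          simp
        · rw [Nat.choose_eq_zero_of_lt (show n < b from by omega)]
          simp
    rw [hval]
    have h2 : (2 : ℝ) ^ (-(n : ℝ)) = (1 / 2 : ℝ) ^ n := by
      rw [Real.rpow_neg (by norm_num), Real.rpow_natCast]
      simp
    have hq : (2 * ((m : ℝ) + n) - ((m + n : ℕ) : ℝ)) / (2 * ((m : ℝ) + n)) = 1 / 2 := by
      push_cast
      field_simp
      ring
    rw [h2, hq]
    have : (1 : ℝ) ≤ (m : ℝ) + n + 1 := by linarith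
    nlinarith [pow_pos (show (0:ℝ) < 1/2 by norm_num) n]
  · -- r < m + n
    set x : ℝ := (r : ℝ) / (((m : ℝ) + n) - r) with hxdef
    have hsub : (0 : ℝ) < ((m : ℝ) + n) - r := by
      have : (r : ℝ) < (m : ℝ) + n := by exact_mod_cast hlt
      linarith
    have hx : 0 ≤ x := div_nonneg (Nat.cast_nonneg r) hsub.le
    have hx1 : (0 : ℝ) < 1 + x := by linarith
    have hx2 : (0 : ℝ) < 1 + x / 2 := by linarith
    have hxr : (0 : ℝ) < x ^ r := by
      rcases Nat.eq_zero_or_pos r with h | h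
      · simp [h]
      · refine pow_pos (div_pos ?_ hsub) r
        exact_mod_cast h
    have hC : (0 : ℝ) < ((m + n).choose r : ℝ) := by
      exact_mod_cast Nat.choose_pos hr
    have hA : S * x ^ r ≤ (1 + x / 2) ^ n * (1 + x) ^ m := lemA m n r x hx
    have hB : (1 + x) ^ (m + n)
        ≤ (((m : ℝ) + n) + 1) * ((m + n).choose r : ℝ) * x ^ r := by
      have := lemB_real (m + n) r hlt
      push_cast at this
      rw [hxdef]
      convert this using 2 <;> push_cast <;> ring
    have h1 : (S * x ^ r) * ((1 + x) ^ (m + n))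
        ≤ ((1 + x / 2) ^ n * (1 + x) ^ m) * ((((m : ℝ) + n) + 1) * ((m + n).choose r : ℝ) * x ^ r) := by
      refine mul_le_mul hA hB (pow_nonneg hx1.le _) (by positivity)
    have h4 : S * (1 + x) ^ (m + n)
        ≤ (1 + x / 2) ^ n * (1 + x) ^ m * ((((m : ℝ) + n) + 1) * ((m + n).choose r : ℝ)) := by
      refine le_of_mul_le_mul_right ?_ hxr
      calc S * (1 + x) ^ (m + n) * x ^ r = (S * x ^ r) * ((1 + x) ^ (m + n)) := by ring
        _ ≤ ((1 + x / 2) ^ n * (1 + x) ^ m) * ((((m : ℝ) + n) + 1) * ((m + n).choose r : ℝ) * x ^ r) := h1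
        _ = (1 + x / 2) ^ n * (1 + x) ^ m * ((((m : ℝ) + n) + 1) * ((m + n).choose r : ℝ)) * x ^ r := by
            ring
    have h5 : S * (1 + x) ^ n
        ≤ (((m : ℝ) + n) + 1) * (1 + x / 2) ^ n * ((m + n).choose r : ℝ) := by
      refine le_of_mul_le_mul_right ?_ (pow_pos hx1 m)
      calc S * (1 + x) ^ n * (1 + x) ^ m = S * (1 + x) ^ (m + n) := by
            rw [pow_add]; ring
        _ ≤ (1 + x / 2) ^ n * (1 + x) ^ m * ((((m : ℝ) + n) + 1) * ((m + n).choose r : ℝ)) := h4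
        _ = (((m : ℝ) + n) + 1) * (1 + x / 2) ^ n * ((m + n).choose r : ℝ) * (1 + x) ^ m := by ring
    have hq : (2 * ((m : ℝ) + n) - r) / (2 * ((m : ℝ) + n)) = (1 + x / 2) / (1 + x) := by
      rw [hxdef]
      field_simp
      ring
    rw [hS, div_le_iff₀ hC, hq, div_pow]
    rw [show ((m : ℝ) + n + 1) * ((1 + x / 2) ^ n / (1 + x) ^ n) * ((m + n).choose r : ℝ)
        = ((((m : ℝ) + n) + 1) * (1 + x / 2) ^ n * ((m + n).choose r : ℝ)) / (1 + x) ^ n from by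
      ring]
    rw [le_div_iff₀ (pow_pos hx1 n)]
    exact h5

/-- with `r n = c·(m n + n)` for a constant `c ∈ (0,1]` and
`n/(m n + n) → α > 0`, the expectation `E[2^{-K}]` tends to `0` as `n → ∞`, and
for `n` large enough `E[2^{-K}] ≤ 2^{-cαn/2} + 2exp(−cα²n/2)`. -/
theorem stmt15 (c α : ℝ) (hc0 : 0 < c) (hc1 : c ≤ 1) (hα : 0 < α)
    (m r : ℕ → ℕ)
    (hr : ∀ n, (r n : ℝ) = c * ((m n : ℝ) + n))
    (hlim : Filter.Tendsto (fun n : ℕ => (n : ℝ) / ((m n : ℝ) + n))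
      Filter.atTop (nhds α)) :
    Filter.Tendsto (fun n => expTwoPowNegK (m n) n (r n)) Filter.atTop (nhds 0)
      ∧ ∀ᶠ n : ℕ in Filter.atTop,
          expTwoPowNegK (m n) n (r n)
            ≤ (2 : ℝ) ^ (-(c * α * n / 2))
                + 2 * Real.exp (-(c * α ^ 2 * n / 2)) := by
  -- basic facts
  have hp1 : ∀ n : ℕ, (n : ℝ) / ((m n : ℝ) + n) ≤ 1 := by
    intro n
    rcases eq_or_lt_of_le (show (0 : ℝ) ≤ (m n : ℝ) + n by positivity) with h | h
    · rw [← h]; simp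
    · rw [div_le_one h]
      have : (0 : ℝ) ≤ (m n : ℝ) := Nat.cast_nonneg _
      linarith
  have hα1 : α ≤ 1 := le_of_tendsto hlim (Filter.Eventually.of_forall hp1)
  have hlog2 : Real.log 2 < 1 := by
    have := Real.log_lt_sub_one_of_pos (show (0:ℝ) < 2 by norm_num) (by norm_num)
    linarith
  have hlog2' : (0 : ℝ) < Real.log 2 := Real.log_pos (by norm_num)
  set δ : ℝ := c * (1 - α * Real.log 2) / 2 with hδdef
  have hδ : 0 < δ := by
    have h1 : α * Real.log 2 ≤ Real.log 2 := mul_le_of_le_one_left hlog2'.le hα1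
    have : 0 < 1 - α * Real.log 2 := by linarith
    positivity
  set A : ℝ := 2 / α + 1 with hAdef
  have hA : 0 < A := by positivity
  -- the eventual polynomial-vs-exponential fact
  have h1t : Tendsto (fun n : ℕ => δ * n) atTop atTop :=
    Tendsto.const_mul_atTop hδ tendsto_natCast_atTop_atTop
  have h2t : Tendsto (fun x : ℝ => x * Real.exp (-x)) atTop (nhds 0) := by
    simpa using tendsto_pow_mul_exp_neg_atTop_nhds_zero 1
  have h3t : Tendsto (fun n : ℕ => (δ * n) * Real.exp (-(δ * n))) atTop (nhds 0) :=
    h2t.comp h1t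
  have h4t : Tendsto (fun n : ℕ => Real.exp (-(δ * n))) atTop (nhds 0) :=
    tendsto_exp_neg_atTop_nhds_zero.comp h1t
  have htend : Tendsto (fun n : ℕ => (A * n + 1) * Real.exp (-(δ * n))) atTop (nhds 0) := by
    have h5 := (h3t.const_mul (A / δ)).add h4t
    rw [mul_zero, add_zero] at h5
    refine h5.congr fun n => ?_
    field_simp
  have ev2 : ∀ᶠ n : ℕ in atTop, (A * n + 1) * Real.exp (-(δ * n)) < 1 :=
    Tendsto.eventually_lt_const (by norm_num) htend
  have ev1 : ∀ᶠ n : ℕ in atTop, α / 2 ≤ (n : ℝ) / ((m n : ℝ) + n) :=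
    hlim.eventually (eventually_ge_nhds (by linarith))
  -- main eventual bound
  have hEv : ∀ᶠ n : ℕ in atTop,
      expTwoPowNegK (m n) n (r n)
        ≤ (2 : ℝ) ^ (-(c * α * n / 2)) + 2 * Real.exp (-(c * α ^ 2 * n / 2)) := by
    filter_upwards [ev1, ev2, eventually_ge_atTop 1] with n h1 h2 h3
    set Nr : ℝ := (m n : ℝ) + n with hNrdef
    have hn1 : (1 : ℝ) ≤ n := by exact_mod_cast h3
    have hNr_pos : 0 < Nr := by
      have : (0 : ℝ) ≤ (m n : ℝ) := Nat.cast_nonneg _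
      rw [hNrdef]; linarith
    have hrR : (r n : ℝ) = c * Nr := hr n
    have hRle : r n ≤ m n + n := by
      have : (r n : ℝ) ≤ ((m n + n : ℕ) : ℝ) := by
        push_cast
        rw [hrR]
        nlinarith
      exact_mod_cast this
    have hMN_pos : 0 < m n + n := by omega
    have key := keyBound (m n) n (r n) hMN_pos hRle
    have hq : (2 * Nr - (r n : ℝ)) / (2 * Nr) = 1 - c / 2 := by
      rw [hrR]; field_simp
    rw [hq] at key
    have h0c2 : (0 : ℝ) ≤ 1 - c / 2 := by linarith
    have hexp : (1 - c / 2 : ℝ) ≤ Real.exp (-(c / 2)) := by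
      have := Real.add_one_le_exp (-(c / 2)); linarith
    have hpow : (1 - c / 2 : ℝ) ^ n ≤ Real.exp (-(c / 2)) ^ n :=
      pow_le_pow_left₀ h0c2 hexp n
    have hexpn : Real.exp (-(c / 2)) ^ n = Real.exp ((n : ℝ) * (-(c / 2))) :=
      (Real.exp_nat_mul _ n).symm
    -- Nr + 1 ≤ A n + 1 ≤ exp (δ n)
    have hNle : Nr * α ≤ 2 * n := by
      have := (le_div_iff₀ hNr_pos).mp h1
      nlinarith
    have hNA : Nr + 1 ≤ A * n + 1 := by
      have h2α : Nr ≤ 2 / α * n := by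
        rw [div_mul_eq_mul_div, le_div_iff₀ hα]
        linarith
      have hn0 : (0 : ℝ) ≤ n := by linarith
      rw [hAdef]
      linarith
    have hAexp : A * n + 1 ≤ Real.exp (δ * n) := by
      have he : (0 : ℝ) < Real.exp (-(δ * n)) := Real.exp_pos _
      have := (lt_div_iff₀ he).mpr h2
      rw [one_div, ← Real.exp_neg, neg_neg] at this
      linarith
    have hchain : expTwoPowNegK (m n) n (r n) ≤ Real.exp (δ * n) * Real.exp ((n : ℝ) * (-(c / 2))) := by
      calc expTwoPowNegK (m n) n (r n) ≤ (Nr + 1) * (1 - c / 2) ^ n := by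
            rw [hNrdef]; exact key
        _ ≤ (Nr + 1) * Real.exp ((n : ℝ) * (-(c / 2))) := by
            refine mul_le_mul_of_nonneg_left ?_ (by linarith)
            rw [← hexpn]; exact hpow
        _ ≤ Real.exp (δ * n) * Real.exp ((n : ℝ) * (-(c / 2))) := by
            refine mul_le_mul_of_nonneg_right ?_ (Real.exp_pos _).le
            exact le_trans hNA hAexp
    have hfirst : Real.exp (δ * n) * Real.exp ((n : ℝ) * (-(c / 2)))
        = (2 : ℝ) ^ (-(c * α * n / 2)) := by
      rw [← Real.exp_add, Real.rpow_def_of_pos (show (0:ℝ) < 2 by norm_num)]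
      congr 1
      rw [hδdef]
      ring
    rw [hfirst] at hchain
    have hsec : (0 : ℝ) ≤ 2 * Real.exp (-(c * α ^ 2 * n / 2)) := by positivity
    linarith
  refine ⟨?_, hEv⟩
  -- squeeze
  refine squeeze_zero' (Filter.Eventually.of_forall fun n => ?_) hEv ?_
  · refine Finset.sum_nonneg fun k _ => ?_
    positivity
  · -- RHS tends to 0
    have b1 : (0 : ℝ) < c * α * Real.log 2 / 2 := by positivity
    have b2 : (0 : ℝ) < c * α ^ 2 / 2 := by positivity
    have t1 : Tendsto (fun n : ℕ => (2 : ℝ) ^ (-(c * α * n / 2))) atTop (nhds 0) := by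
      have hcomp : Tendsto (fun n : ℕ => (c * α * Real.log 2 / 2) * n) atTop atTop :=
        Tendsto.const_mul_atTop b1 tendsto_natCast_atTop_atTop
      have := tendsto_exp_neg_atTop_nhds_zero.comp hcomp
      refine this.congr fun n => ?_
      simp only [Function.comp]
      rw [Real.rpow_def_of_pos (show (0:ℝ) < 2 by norm_num)]
      congr 1
      ring
    have t2 : Tendsto (fun n : ℕ => 2 * Real.exp (-(c * α ^ 2 * n / 2))) atTop (nhds 0) := by
      have hcomp : Tendsto (fun n : ℕ => (c * α ^ 2 / 2) * n) atTop atTop :=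
        Tendsto.const_mul_atTop b2 tendsto_natCast_atTop_atTop
      have h := tendsto_exp_neg_atTop_nhds_zero.comp hcomp
      have h2 := h.const_mul (2 : ℝ)
      rw [mul_zero] at h2
      refine h2.congr fun n => ?_
      simp only [Function.comp]
      congr 2
      ring
    have := t1.add t2
    rwa [add_zero] at this
end
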